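/- Let M and M' be alternative O-bimodules (each satisfying M = O·A(M)). Then every left O-module homomorphism f : M → M' (R-linear with f(px) = p f(x) for all p ∈ O, x ∈ M) is automatically a right O-module homomorphism: f(xp) = f(x)p for all x ∈ M, p ∈ O. -/

import Mathlib

noncomputable section

open scoped Quaternion

/-- The octonions, built from pairs of quaternions via the Cayley–Dickson construction. -/
def Octonion : Type := ℍ[ℝ] × ℍ[ℝ]

namespace Octonion

def mk' (a b : ℍ[ℝ]) : Octonion := Prod.mk a b
def q1 (x : Octonion) : ℍ[ℝ] := Prod.fst x
def q2 (x : Octonion) : ℍ[ℝ] := Prod.snd x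

instance : AddCommGroup Octonion := inferInstanceAs (AddCommGroup (ℍ[ℝ] × ℍ[ℝ]))
instance : Module ℝ Octonion := inferInstanceAs (Module ℝ (ℍ[ℝ] × ℍ[ℝ]))
instance : One Octonion := ⟨mk' 1 0⟩
instance : Mul Octonion :=
  ⟨fun x y => mk' (q1 x * q1 y - star (q2 y) * q2 x) (q2 y * q1 x + q2 x * star (q1 y))⟩

/-- Octonion conjugation. -/
def conj (x : Octonion) : Octonion := mk' (star (q1 x)) (-(q2 x))

/-- The real part of an octonion. -/
def re (x : Octonion) : ℝ := (q1 x).re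

/-- The standard basis `e 0 = 1, e 1, …, e 7` of the octonions. -/
def e : Fin 8 → Octonion :=
  ![mk' 1 0, mk' ⟨0,1,0,0⟩ 0, mk' ⟨0,0,1,0⟩ 0, mk' ⟨0,0,0,1⟩ 0,
    mk' 0 1, mk' 0 ⟨0,1,0,0⟩, mk' 0 ⟨0,0,1,0⟩, mk' 0 ⟨0,0,0,1⟩]

/-- The coordinates of an octonion with respect to the standard basis. -/
def coord (x : Octonion) : Fin 8 → ℝ :=
  ![(q1 x).re, (q1 x).imI, (q1 x).imJ, (q1 x).imK,
    (q2 x).re, (q2 x).imI, (q2 x).imJ, (q2 x).imK]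

end Octonion

/-!
Let `y` be an associative element of an alternative `𝕆`-bimodule. The alternative laws give
`(q y) p = q (y p)` and `y (p q) = (y p) q`, so `c p := y p - p y` obeys the Leibniz rule
`c (a b) = a c(b) + c(a) b`. Expanding `c ((p q) r - p (q r))` by this rule leaves three middle
associators, each of which again equals `c` of a cyclic rotation of the associator `(p, q, r)`.
Since the octonion associator is invariant under cyclic rotation, `c (p, q, r) = 3 c (p, q, r)`,
so `c` kills associators. Together with `1` the associators span `𝕆`, hence `y p = p y`.
A left `𝕆`-linear `f` maps associative elements to associative elements, so on the spanning
elements `q y` it commutes with the right action: `f ((q y) p) = q p f(y) = (q f(y)) p`.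
-/

namespace Octonion

@[ext] lemma ext {x y : Octonion} (h1 : q1 x = q1 y) (h2 : q2 x = q2 y) : x = y :=
  Prod.ext h1 h2

@[simp] lemma q1_mul (x y : Octonion) : q1 (x * y) = q1 x * q1 y - star (q2 y) * q2 x := rfl
@[simp] lemma q2_mul (x y : Octonion) : q2 (x * y) = q2 y * q1 x + q2 x * star (q1 y) := rfl
@[simp] lemma q1_add (x y : Octonion) : q1 (x + y) = q1 x + q1 y := rfl
@[simp] lemma q2_add (x y : Octonion) : q2 (x + y) = q2 x + q2 y := rfl
@[simp] lemma q1_sub (x y : Octonion) : q1 (x - y) = q1 x - q1 y := rfl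
@[simp] lemma q2_sub (x y : Octonion) : q2 (x - y) = q2 x - q2 y := rfl
@[simp] lemma q1_smul (c : ℝ) (x : Octonion) : q1 (c • x) = c • q1 x := rfl
@[simp] lemma q2_smul (c : ℝ) (x : Octonion) : q2 (c • x) = c • q2 x := rfl
@[simp] lemma q1_mk' (a b : ℍ[ℝ]) : q1 (mk' a b) = a := rfl
@[simp] lemma q2_mk' (a b : ℍ[ℝ]) : q2 (mk' a b) = b := rfl

/-- `⟨a, b, c, d⟩` alone elaborates at type `ℍ[ℝ,-1,0,-1]`, where the `Quaternion` simp lemmas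
do not fire. -/
def quat (a b c d : ℝ) : ℍ[ℝ] := ⟨a, b, c, d⟩

@[simp] lemma quat_re (a b c d : ℝ) : (quat a b c d).re = a := rfl
@[simp] lemma quat_imI (a b c d : ℝ) : (quat a b c d).imI = b := rfl
@[simp] lemma quat_imJ (a b c d : ℝ) : (quat a b c d).imJ = c := rfl
@[simp] lemma quat_imK (a b c d : ℝ) : (quat a b c d).imK = d := rfl

lemma e_eq : e = ![mk' (quat 1 0 0 0) 0, mk' (quat 0 1 0 0) 0, mk' (quat 0 0 1 0) 0,
    mk' (quat 0 0 0 1) 0, mk' 0 (quat 1 0 0 0), mk' 0 (quat 0 1 0 0), mk' 0 (quat 0 0 1 0),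
    mk' 0 (quat 0 0 0 1)] :=
  rfl

lemma e_zero : e 0 = 1 := rfl

lemma sum_coord_smul_e (x : Octonion) : ∑ i, coord x i • e i = x := by
  ext <;> simp [Fin.sum_univ_eight, e_eq, coord]

def associator (x y z : Octonion) : Octonion := x * y * z - x * (y * z)

lemma associator_cycle (x y z : Octonion) : associator x y z = associator y z x := by
  ext <;>
    simp only [associator, q1_mul, q2_mul, q1_sub, q2_sub, Quaternion.re_mul,
      Quaternion.imI_mul, Quaternion.imJ_mul, Quaternion.imK_mul, Quaternion.re_sub,
      Quaternion.imI_sub, Quaternion.imJ_sub, Quaternion.imK_sub, Quaternion.re_add,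
      Quaternion.imI_add, Quaternion.imJ_add, Quaternion.imK_add, Quaternion.re_star,
      Quaternion.imI_star, Quaternion.imJ_star, Quaternion.imK_star] <;>
    ring

lemma exists_associator_eq_two_smul_e (i : Fin 8) (hi : i ≠ 0) :
    ∃ x y z, associator x y z = (2 : ℝ) • e i := by
  fin_cases i
  · exact absurd rfl hi
  · exact ⟨e 7, e 4, e 2, by ext <;> simp [associator, e_eq, one_add_one_eq_two]⟩
  · exact ⟨e 5, e 4, e 3, by ext <;> simp [associator, e_eq, one_add_one_eq_two]⟩
  · exact ⟨e 6, e 4, e 1, by ext <;> simp [associator, e_eq, one_add_one_eq_two]⟩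
  · exact ⟨e 1, e 7, e 2, by ext <;> simp [associator, e_eq, one_add_one_eq_two]⟩
  · exact ⟨e 2, e 3, e 4, by ext <;> simp [associator, e_eq, one_add_one_eq_two]⟩
  · exact ⟨e 3, e 1, e 4, by ext <;> simp [associator, e_eq, one_add_one_eq_two]⟩
  · exact ⟨e 1, e 2, e 4, by ext <;> simp [associator, e_eq, one_add_one_eq_two]⟩

lemma span_one_associators :
    Submodule.span ℝ {x : Octonion | x = 1 ∨ ∃ a b c, associator a b c = x} = ⊤ := by
  refine eq_top_iff.mpr fun x _ => ?_
  rw [← sum_coord_smul_e x]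
  refine Submodule.sum_mem _ fun i _ => Submodule.smul_mem _ _ ?_
  by_cases hi : i = 0
  · exact Submodule.subset_span (Or.inl (hi ▸ e_zero))
  · obtain ⟨a, b, c, h⟩ := exists_associator_eq_two_smul_e i hi
    have he : e i = (2⁻¹ : ℝ) • associator a b c := by
      rw [h, smul_smul, inv_mul_cancel₀ two_ne_zero, one_smul]
    rw [he]
    exact Submodule.smul_mem _ _ (Submodule.subset_span (Or.inr ⟨a, b, c, rfl⟩))

end Octonion

namespace OctonionBimodule

variable {N : Type*} [AddCommGroup N] [Module ℝ N] (L R : Octonion →ₗ[ℝ] N →ₗ[ℝ] N)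

/-- Reading `L p m` as `p m` and `R p m` as `m p`: the associator identity
`(p, q, m) = (q, m, p)`. -/
def LeftMiddleLaw : Prop :=
  ∀ (p q : Octonion) (m : N), L (p * q) m - L p (L q m) = R p (L q m) - L q (R p m)

/-- The associator identity `(q, m, p) = (m, p, q)`. -/
def MiddleRightLaw : Prop :=
  ∀ (p q : Octonion) (m : N), R p (L q m) - L q (R p m) = R q (R p m) - R (p * q) m

def IsAssociative (y : N) : Prop := ∀ a b : Octonion, L (a * b) y = L a (L b y)

def commutator (y : N) : Octonion →ₗ[ℝ] N := LinearMap.applyₗ y ∘ₗ (R - L)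

lemma commutator_apply (y : N) (p : Octonion) : commutator L R y p = R p y - L p y := rfl

variable {L R} {y : N}

lemma IsAssociative.map {N' : Type*} [AddCommGroup N'] [Module ℝ N']
    {L' : Octonion →ₗ[ℝ] N' →ₗ[ℝ] N'} {f : N → N'} (hf : ∀ p x, f (L p x) = L' p (f x))
    (hy : IsAssociative L y) : IsAssociative L' (f y) := fun a b => by
  rw [← hf, ← hf, ← hf, hy]

lemma right_left_comm_of_isAssociative (hLM : LeftMiddleLaw L R) (hy : IsAssociative L y)
    (p q : Octonion) : R p (L q y) = L q (R p y) := by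
  have h := hLM p q y
  rwa [hy, sub_self, eq_comm, sub_eq_zero] at h

lemma right_mul_of_isAssociative (hLM : LeftMiddleLaw L R) (hMR : MiddleRightLaw L R)
    (hy : IsAssociative L y) (p q : Octonion) : R (p * q) y = R q (R p y) := by
  have h := hMR p q y
  rwa [right_left_comm_of_isAssociative hLM hy, sub_self, eq_comm, sub_eq_zero, eq_comm] at h

lemma commutator_mul (hLM : LeftMiddleLaw L R) (hMR : MiddleRightLaw L R)
    (hy : IsAssociative L y) (a b : Octonion) :
    commutator L R y (a * b) = L a (commutator L R y b) + R b (commutator L R y a) := by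
  simp only [commutator_apply, map_sub, right_mul_of_isAssociative hLM hMR hy, hy a b,
    right_left_comm_of_isAssociative hLM hy]
  abel

lemma commutator_associator_eq_sum (hLM : LeftMiddleLaw L R) (hMR : MiddleRightLaw L R)
    (hy : IsAssociative L y) (p q r : Octonion) :
    commutator L R y (Octonion.associator p q r) =
      (R p (L q (commutator L R y r)) - L q (R p (commutator L R y r))) +
      (R r (L p (commutator L R y q)) - L p (R r (commutator L R y q))) +
      (R q (L r (commutator L R y p)) - L r (R q (commutator L R y p))) := by
  have hc := commutator_mul hLM hMR hy
  have hpq := hLM p q (commutator L R y r)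
  have hqr := hMR q r (commutator L R y p)
  rw [Octonion.associator, map_sub, hc, hc, hc, hc, map_add, map_add]
  linear_combination (norm := abel) hpq - hqr

lemma middle_commutator (hLM : LeftMiddleLaw L R) (hMR : MiddleRightLaw L R)
    (hy : IsAssociative L y) (p q r : Octonion) :
    R q (L r (commutator L R y p)) - L r (R q (commutator L R y p)) =
      commutator L R y (Octonion.associator p q r) := by
  have hR : R q (L r (R p y)) - L r (R q (R p y)) = R (Octonion.associator p q r) y := by
    rw [hMR, ← right_mul_of_isAssociative hLM hMR hy, ← right_mul_of_isAssociative hLM hMR hy,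
      ← right_mul_of_isAssociative hLM hMR hy, Octonion.associator, map_sub,
      LinearMap.sub_apply]
  have hL : R q (L r (L p y)) - L r (R q (L p y)) = L (Octonion.associator p q r) y := by
    rw [Octonion.associator_cycle, ← hLM, ← hy, ← hy, ← hy, Octonion.associator, map_sub,
      LinearMap.sub_apply]
  rw [commutator_apply, commutator_apply, ← hL, ← hR, map_sub, map_sub, map_sub, map_sub]
  abel

lemma commutator_associator (hLM : LeftMiddleLaw L R) (hMR : MiddleRightLaw L R)
    (hy : IsAssociative L y) (p q r : Octonion) :
    commutator L R y (Octonion.associator p q r) = 0 := by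
  have h := commutator_associator_eq_sum hLM hMR hy p q r
  -- all three cyclic rotations of the associator coincide, so `h` reads `c = c + c + c`
  rw [middle_commutator hLM hMR hy, middle_commutator hLM hMR hy,
    middle_commutator hLM hMR hy, Octonion.associator_cycle r,
    ← Octonion.associator_cycle p] at h
  have h2 : (2 : ℝ) • commutator L R y (Octonion.associator p q r) = 0 := by
    rw [two_smul]
    linear_combination (norm := abel) -h
  simpa using h2

lemma right_eq_left_of_isAssociative (hL1 : ∀ m : N, L 1 m = m) (hR1 : ∀ m : N, R 1 m = m)
    (hLM : LeftMiddleLaw L R) (hMR : MiddleRightLaw L R) (hy : IsAssociative L y)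
    (p : Octonion) : R p y = L p y := by
  have hc : commutator L R y = 0 := by
    refine LinearMap.ext_on Octonion.span_one_associators ?_
    rintro x (rfl | ⟨a, b, c, rfl⟩)
    · simp [commutator_apply, hL1, hR1]
    · exact commutator_associator hLM hMR hy a b c
  rw [← sub_eq_zero, ← commutator_apply, hc, LinearMap.zero_apply]

end OctonionBimodule

open Octonion in
theorem octonion_bimodule_left_hom_is_right_hom_general
    {M M' : Type*} [AddCommGroup M] [Module ℝ M] [AddCommGroup M'] [Module ℝ M']
    (L R : Octonion →ₗ[ℝ] M →ₗ[ℝ] M)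
    (hL1 : ∀ m : M, L 1 m = m) (hR1 : ∀ m : M, R 1 m = m)
    (hLM : ∀ (p q : Octonion) (m : M),
      L (p * q) m - L p (L q m) = R p (L q m) - L q (R p m))
    (hMR : ∀ (p q : Octonion) (m : M),
      R p (L q m) - L q (R p m) = R q (R p m) - R (p * q) m)
    (hspan : ∀ m : M, m ∈ Submodule.span ℝ
      {y : M | ∃ (p : Octonion) (x : M),
        (∀ a b : Octonion, L (a * b) x = L a (L b x)) ∧ y = L p x})
    (L' R' : Octonion →ₗ[ℝ] M' →ₗ[ℝ] M')
    (hL1' : ∀ m : M', L' 1 m = m) (hR1' : ∀ m : M', R' 1 m = m)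
    (hLM' : ∀ (p q : Octonion) (m : M'),
      L' (p * q) m - L' p (L' q m) = R' p (L' q m) - L' q (R' p m))
    (hMR' : ∀ (p q : Octonion) (m : M'),
      R' p (L' q m) - L' q (R' p m) = R' q (R' p m) - R' (p * q) m)
    (f : M →ₗ[ℝ] M')
    (hf : ∀ (p : Octonion) (x : M), f (L p x) = L' p (f x)) :
    ∀ (x : M) (p : Octonion), f (R p x) = R' p (f x) := by
  intro x p
  refine Submodule.span_induction (p := fun m _ => f (R p m) = R' p (f m))
    ?_ (by simp) (fun a b _ _ ha hb => ?_) (fun t a _ ha => ?_) (hspan x)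
  · rintro _ ⟨q, x₀, hx₀, rfl⟩
    have hfx₀ : OctonionBimodule.IsAssociative L' (f x₀) :=
      OctonionBimodule.IsAssociative.map hf hx₀
    calc f (R p (L q x₀))
        = f (L q (L p x₀)) := by
          rw [OctonionBimodule.right_left_comm_of_isAssociative hLM hx₀,
            OctonionBimodule.right_eq_left_of_isAssociative hL1 hR1 hLM hMR hx₀]
      _ = L' q (L' p (f x₀)) := by rw [hf, hf]
      _ = R' p (L' q (f x₀)) := by
          rw [← OctonionBimodule.right_eq_left_of_isAssociative hL1' hR1' hLM' hMR' hfx₀,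
            OctonionBimodule.right_left_comm_of_isAssociative hLM' hfx₀]
      _ = R' p (f (L q x₀)) := by rw [hf]
  · rw [map_add, map_add, ha, hb, map_add, map_add]
  · rw [map_smul, map_smul, ha, map_smul, map_smul]

open Octonion in
/-- Between alternative `𝕆`-bimodules `M, M'` (each with `M = 𝕆·A(M)`), every
left `𝕆`-module homomorphism is automatically a right `𝕆`-module homomorphism. -/
theorem octonion_bimodule_left_hom_is_right_hom
    {M M' : Type*} [AddCommGroup M] [Module ℝ M] [AddCommGroup M'] [Module ℝ M']
    (L R : Octonion →ₗ[ℝ] M →ₗ[ℝ] M)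
    (hL1 : ∀ m : M, L 1 m = m) (hR1 : ∀ m : M, R 1 m = m)
    (hLM : ∀ (p q : Octonion) (m : M),
      L (p * q) m - L p (L q m) = R p (L q m) - L q (R p m))
    (hMR : ∀ (p q : Octonion) (m : M),
      R p (L q m) - L q (R p m) = R q (R p m) - R (p * q) m)
    (hspan : ∀ m : M, m ∈ Submodule.span ℝ
      {y : M | ∃ (p : Octonion) (x : M),
        (∀ a b : Octonion, L (a * b) x = L a (L b x)) ∧ y = L p x})
    (L' R' : Octonion →ₗ[ℝ] M' →ₗ[ℝ] M')
    (hL1' : ∀ m : M', L' 1 m = m) (hR1' : ∀ m : M', R' 1 m = m)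
    (hLM' : ∀ (p q : Octonion) (m : M'),
      L' (p * q) m - L' p (L' q m) = R' p (L' q m) - L' q (R' p m))
    (hMR' : ∀ (p q : Octonion) (m : M'),
      R' p (L' q m) - L' q (R' p m) = R' q (R' p m) - R' (p * q) m)
    (hspan' : ∀ m : M', m ∈ Submodule.span ℝ
      {y : M' | ∃ (p : Octonion) (x : M'),
        (∀ a b : Octonion, L' (a * b) x = L' a (L' b x)) ∧ y = L' p x})
    (f : M →ₗ[ℝ] M')
    (hf : ∀ (p : Octonion) (x : M), f (L p x) = L' p (f x)) :
    ∀ (x : M) (p : Octonion), f (R p x) = R' p (f x) :=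
  octonion_bimodule_left_hom_is_right_hom_general L R hL1 hR1 hLM hMR hspan L' R' hL1' hR1' hLM'
    hMR' f hf
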